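/- arXiv:2311.01754 — 4 statements merged into one kernel-verified Lean document; each statement's English description precedes it below -/
import Mathlib

section
/- Let σ ⊆ ℝ^k and τ ⊆ ℝ^n be convex polyhedral cones and Φ : ℝ^k → ℝ^n a linear map. Then every face of the cone σ̃ + τ (with σ̃ the graph of Φ over σ, τ embedded as {0} × τ) is of the form σ̃' + τ' where σ' is a face of σ and τ' a face of τ; in particular the face lattice of σ̃ + τ is isomorphic to that of σ × τ. -/
open scoped Pointwise

noncomputable section

/-- A convex polyhedral cone: the set of nonnegative linear combinations of finitely many
vectors, i.e. the span over the semiring of nonnegative reals of a finite set. -/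
def IsPolyCone {E : Type*} [AddCommMonoid E] [Module ℝ E] (C : Set E) : Prop :=
  ∃ s : Finset E,
    C = (Submodule.span {c : ℝ // 0 ≤ c} (s : Set E) : Submodule {c : ℝ // 0 ≤ c} E)

/-- Nonnegative span of a set. -/
def posSpan {E : Type*} [AddCommMonoid E] [Module ℝ E] (s : Set E) : Set E :=
  (Submodule.span {c : ℝ // 0 ≤ c} s : Submodule {c : ℝ // 0 ≤ c} E)

/-- The graph of a map `Φ` over a set `σ`. -/
def graphOver {k n : ℕ} (Φ : (Fin k → ℝ) → (Fin n → ℝ)) (σ : Set (Fin k → ℝ)) :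
    Set ((Fin k → ℝ) × (Fin n → ℝ)) :=
  (fun x => (x, Φ x)) '' σ

/-- The twisted cone `σ̃ + τ`: the Minkowski sum of the graph of `Φ` over `σ` with
`τ` embedded as `{0} × τ`. -/
def twistedCone {k n : ℕ} (Φ : (Fin k → ℝ) → (Fin n → ℝ)) (σ : Set (Fin k → ℝ))
    (τ : Set (Fin n → ℝ)) : Set ((Fin k → ℝ) × (Fin n → ℝ)) :=
  graphOver Φ σ + ({0} : Set (Fin k → ℝ)) ×ˢ τ

/-- A face of a convex cone `C`: the intersection of `C` with a supporting hyperplane,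
together with `C` itself. -/
def IsFaceOf {E : Type*} [AddCommMonoid E] [Module ℝ E] (F C : Set E) : Prop :=
  F = C ∨ ∃ ℓ : E →ₗ[ℝ] ℝ, (∀ x ∈ C, ℓ x ≤ 0) ∧ F = {x ∈ C | ℓ x = 0}

lemma polyCone_zero {E : Type*} [AddCommMonoid E] [Module ℝ E] {C : Set E}
    (h : IsPolyCone C) : (0:E) ∈ C := by
  obtain ⟨s, rfl⟩ := h
  exact Submodule.zero_mem _

lemma isFaceOf_image {E E' : Type*} [AddCommGroup E] [Module ℝ E] [AddCommGroup E'] [Module ℝ E']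
    (e : E ≃ₗ[ℝ] E') {F C : Set E} (h : IsFaceOf F C) : IsFaceOf (e '' F) (e '' C) := by
  rcases h with rfl | ⟨ℓ, hle, rfl⟩
  · exact Or.inl rfl
  · refine Or.inr ⟨ℓ.comp e.symm.toLinearMap, ?_, ?_⟩
    · rintro x ⟨y, hy, rfl⟩; simpa using hle y hy
    · ext x
      simp only [Set.mem_image, Set.mem_setOf_eq, LinearMap.comp_apply, LinearEquiv.coe_coe]
      constructor
      · rintro ⟨y, ⟨hy, hℓ⟩, rfl⟩; exact ⟨⟨y, hy, rfl⟩, by simpa using hℓ⟩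
      · rintro ⟨⟨y, hy, rfl⟩, hℓ⟩; exact ⟨y, ⟨hy, by simpa using hℓ⟩, rfl⟩

lemma prod_face {k n : ℕ} {σ : Set (Fin k → ℝ)} {τ : Set (Fin n → ℝ)}
    (h0σ : (0:Fin k → ℝ) ∈ σ) (h0τ : (0:Fin n → ℝ) ∈ τ)
    {F : Set ((Fin k → ℝ) × (Fin n → ℝ))} (hF : IsFaceOf F (σ ×ˢ τ)) :
    ∃ σ' τ', IsFaceOf σ' σ ∧ IsFaceOf τ' τ ∧ F = σ' ×ˢ τ' := by
  rcases hF with rfl | ⟨ℓ, hle, rfl⟩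
  · exact ⟨σ, τ, Or.inl rfl, Or.inl rfl, rfl⟩
  · set ℓ₁ := ℓ.comp (LinearMap.inl ℝ _ _) with hℓ₁
    set ℓ₂ := ℓ.comp (LinearMap.inr ℝ _ _) with hℓ₂
    have hsplit : ∀ x y, ℓ (x, y) = ℓ₁ x + ℓ₂ y := by
      intro x y
      have hxy : ((x, y) : (Fin k → ℝ) × (Fin n → ℝ)) = (x, 0) + (0, y) := by simp
      rw [hxy, map_add]; rfl
    have h1 : ∀ x ∈ σ, ℓ₁ x ≤ 0 := fun x hx => hle (x, 0) ⟨hx, h0τ⟩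
    have h2 : ∀ y ∈ τ, ℓ₂ y ≤ 0 := fun y hy => hle (0, y) ⟨h0σ, hy⟩
    refine ⟨{x ∈ σ | ℓ₁ x = 0}, {y ∈ τ | ℓ₂ y = 0}, Or.inr ⟨ℓ₁, h1, rfl⟩,
      Or.inr ⟨ℓ₂, h2, rfl⟩, ?_⟩
    ext ⟨x, y⟩
    simp only [Set.mem_setOf_eq, Set.mem_prod]
    constructor
    · rintro ⟨⟨hx, hy⟩, h0⟩
      rw [hsplit] at h0
      have hx1 := h1 x hx
      have hy1 := h2 y hy
      exact ⟨⟨hx, by linarith⟩, hy, by linarith⟩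
    · rintro ⟨⟨hx, hx0⟩, hy, hy0⟩
      exact ⟨⟨hx, hy⟩, by rw [hsplit, hx0, hy0]; ring⟩

lemma twisted_eq {k n : ℕ} (Φ : (Fin k → ℝ) →ₗ[ℝ] (Fin n → ℝ)) (σ : Set (Fin k → ℝ))
    (τ : Set (Fin n → ℝ)) :
    twistedCone Φ σ τ =
      (LinearEquiv.skewProd (LinearEquiv.refl ℝ (Fin k → ℝ)) (LinearEquiv.refl ℝ (Fin n → ℝ)) Φ)
        '' (σ ×ˢ τ) := by
  ext ⟨x, y⟩
  constructor
  · rintro ⟨a, ⟨u, hu, rfl⟩, ⟨b1, b2⟩, ⟨hb1, hb2⟩, hsum⟩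
    simp only [Set.mem_singleton_iff] at hb1
    subst hb1
    obtain ⟨h1, h2⟩ := Prod.mk.injEq .. ▸ hsum
    refine ⟨(u, b2), ⟨hu, hb2⟩, ?_⟩
    simp only [LinearEquiv.skewProd_apply, LinearEquiv.refl_apply]
    refine Prod.ext ?_ ?_
    · simpa using h1
    · simp only []
      rw [← h2]; simp [add_comm]
  · rintro ⟨⟨u, v⟩, ⟨hu, hv⟩, heq⟩
    refine ⟨(u, Φ u), ⟨u, hu, rfl⟩, (0, v), ⟨rfl, hv⟩, ?_⟩
    simp only [LinearEquiv.skewProd_apply, LinearEquiv.refl_apply] at heq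
    rw [← heq]
    simp [Prod.ext_iff, add_comm]

/-- every face of `σ̃ + τ` is of the form `σ̃' + τ'` for faces `σ'` of `σ`
and `τ'` of `τ`; in particular the face lattice of `σ̃ + τ` is isomorphic to that of
`σ × τ`. -/
theorem stmt4 (k n : ℕ) (σ : Set (Fin k → ℝ)) (hσ : IsPolyCone σ)
    (τ : Set (Fin n → ℝ)) (hτ : IsPolyCone τ)
    (Φ : (Fin k → ℝ) →ₗ[ℝ] (Fin n → ℝ)) :
    (∀ F : Set ((Fin k → ℝ) × (Fin n → ℝ)), IsFaceOf F (twistedCone Φ σ τ) →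
      ∃ σ' τ', IsFaceOf σ' σ ∧ IsFaceOf τ' τ ∧ F = twistedCone Φ σ' τ') ∧
    Nonempty ({F : Set ((Fin k → ℝ) × (Fin n → ℝ)) // IsFaceOf F (σ ×ˢ τ)} ≃o
      {F : Set ((Fin k → ℝ) × (Fin n → ℝ)) // IsFaceOf F (twistedCone Φ σ τ)}) := by
  classical
  set e := LinearEquiv.skewProd (LinearEquiv.refl ℝ (Fin k → ℝ)) (LinearEquiv.refl ℝ (Fin n → ℝ)) Φ
    with he
  have hkey : ∀ σ' τ', twistedCone Φ σ' τ' = e '' (σ' ×ˢ τ') := fun σ' τ' => twisted_eq Φ σ' τ'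
  have himg : ∀ X : Set ((Fin k → ℝ) × (Fin n → ℝ)), e '' (e.symm '' X) = X := by
    intro X
    have := Equiv.image_symm_image e.toEquiv X
    simpa using this
  have himg' : ∀ X : Set ((Fin k → ℝ) × (Fin n → ℝ)), e.symm '' (e '' X) = X := by
    intro X
    have := Equiv.symm_image_image e.toEquiv X
    simpa using this
  have h4 : e.symm '' twistedCone Φ σ τ = σ ×ˢ τ := by rw [hkey, himg']
  constructor
  · intro F hF
    have h2 : IsFaceOf (e.symm '' F) (σ ×ˢ τ) := by
      have h3 := isFaceOf_image e.symm hF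
      rwa [h4] at h3
    obtain ⟨σ', τ', hs, ht, h3⟩ := prod_face (polyCone_zero hσ) (polyCone_zero hτ) h2
    refine ⟨σ', τ', hs, ht, ?_⟩
    rw [hkey, ← h3, himg]
  · refine ⟨⟨⟨fun F => ⟨e '' F.1, ?_⟩, fun F => ⟨e.symm '' F.1, ?_⟩, ?_, ?_⟩, ?_⟩⟩
    · rw [hkey]; exact isFaceOf_image e F.2
    · have h3 := isFaceOf_image e.symm F.2
      rwa [h4] at h3
    · intro F; ext1; exact himg' F.1
    · intro F; ext1; exact himg F.1
    · intro F G
      exact Set.image_subset_image_iff e.injective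
end
end

section
/- Let σ ⊆ ℝ^k be a smooth (unimodular) cone with respect to a lattice N_B, τ ⊆ ℝ^n smooth with respect to N_F, and Φ a linear map with Φ(N_B) ⊆ N_F. Then σ̃ + τ is a smooth cone with respect to N_B × N_F, where σ̃ is the graph of Φ over σ. -/
open scoped Pointwise

noncomputable section

/-- The embedding of the lattice `ℤ^k` into `ℝ^k`. -/
def latticeEmb (k : ℕ) : (Fin k → ℤ) →+ (Fin k → ℝ) where
  toFun v := fun i => (v i : ℝ)
  map_zero' := by funext i; simp
  map_add' v w := by funext i; simp [Pi.add_apply]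

/-- A cone is smooth (unimodular) with respect to a lattice `f : L → E` if it is
generated by (the images of) part of a `ℤ`-basis of `L`. -/
def IsSmoothCone {L E : Type*} [AddCommGroup L] [AddCommMonoid E] [Module ℝ E]
    (f : L →+ E) (C : Set E) : Prop :=
  ∃ (m : ℕ) (b : Module.Basis (Fin m) ℤ L) (t : Finset (Fin m)),
    C = posSpan (f '' (b '' (t : Set (Fin m))))

open Set

lemma posSpan_union {E : Type*} [AddCommMonoid E] [Module ℝ E] (A B : Set E) :
    posSpan (A ∪ B) = posSpan A + posSpan B := by
  rw [posSpan, Submodule.span_union, Submodule.coe_sup]; rfl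

lemma LinearMap.image_posSpan {E F : Type*} [AddCommMonoid E] [Module ℝ E] [AddCommMonoid F]
    [Module ℝ F] (g : E →ₗ[ℝ] F) (S : Set E) : g '' posSpan S = posSpan (g '' S) :=
  congrArg SetLike.coe (Submodule.map_span (g.restrictScalars {c : ℝ // 0 ≤ c}) S)

lemma Finset.coe_disjSum {α β : Type*} (s : Finset α) (t : Finset β) :
    (s.disjSum t : Set (α ⊕ β)) = Sum.inl '' s ∪ Sum.inr '' t := by
  ext (x | x) <;> simp

lemma AddMonoidHom.exists_comp_eq_of_injective {L M E : Type*} [AddGroup L] [AddGroup M]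
    [AddGroup E] {j : M →+ E} (hj : Function.Injective j) (φ : L →+ E)
    (hφ : ∀ v, ∃ w, φ v = j w) : ∃ ψ : L →+ M, ∀ v, j (ψ v) = φ v := by
  choose ψ hψ using hφ
  refine ⟨AddMonoidHom.mk' ψ fun u v => hj ?_, fun v => (hψ v).symm⟩
  rw [map_add, ← hψ, ← hψ, ← hψ, map_add]

lemma latticeEmb_injective (k : ℕ) : Function.Injective (latticeEmb k) :=
  fun _ _ h => funext fun i => Int.cast_injective (congrFun h i)

lemma twistedCone_eq {k n : ℕ} (Φ : (Fin k → ℝ) →ₗ[ℝ] (Fin n → ℝ)) (σ : Set (Fin k → ℝ))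
    (τ : Set (Fin n → ℝ)) :
    twistedCone Φ σ τ = LinearMap.prod LinearMap.id Φ '' σ + LinearMap.inr ℝ _ _ '' τ := by
  rw [twistedCone, graphOver, singleton_prod]
  rfl

section

variable {L L' E E' : Type*} [AddCommGroup L] [AddCommGroup L'] [AddCommGroup E] [Module ℝ E]
  [AddCommGroup E'] [Module ℝ E']

/-- The shear `(x, y) ↦ (x, y + ψ x)` of `L × L'` carries the product basis to one whose vectors
are `(b i, ψ (b i))` and `(0, c j)`; over `ℝ` these generate the graph of `Φ` over `C`
and `{0} × D`. -/
theorem IsSmoothCone.graph_add_inr {f : L →+ E} {f' : L' →+ E'} {C : Set E} {D : Set E'}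
    (hC : IsSmoothCone f C) (hD : IsSmoothCone f' D) (Φ : E →ₗ[ℝ] E') (ψ : L →+ L')
    (hψ : ∀ v, f' (ψ v) = Φ (f v)) :
    IsSmoothCone (f.prodMap f')
      (LinearMap.prod LinearMap.id Φ '' C + LinearMap.inr ℝ E E' '' D) := by
  obtain ⟨m, b, s, rfl⟩ := hC
  obtain ⟨m', c, t, rfl⟩ := hD
  let shear := (LinearEquiv.refl ℤ L).skewProd (LinearEquiv.refl ℤ L') ψ.toIntLinearMap
  refine ⟨m + m', ((b.prod c).map shear).reindex finSumFinEquiv,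
    (s.disjSum t).map finSumFinEquiv.toEmbedding, ?_⟩
  have hgraph : ∀ x, f.prodMap f' (shear (x, 0)) = LinearMap.prod LinearMap.id Φ (f x) := by
    intro x
    simp [shear, LinearEquiv.skewProd_apply, hψ]
  have hinr : ∀ y, f.prodMap f' (shear (0, y)) = LinearMap.inr ℝ E E' (f' y) := by
    intro y
    simp [shear, LinearEquiv.skewProd_apply]
  rw [LinearMap.image_posSpan, LinearMap.image_posSpan, ← posSpan_union]
  congr 1
  simp only [Finset.coe_map, Equiv.coe_toEmbedding, Finset.coe_disjSum, image_union,
    image_image, Module.Basis.reindex_apply, Equiv.symm_apply_apply, Module.Basis.map_apply,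
    Module.Basis.prod_apply, Sum.elim_inl, Sum.elim_inr, Function.comp, LinearMap.inl_apply,
    LinearMap.inr_apply, hgraph, hinr]

end

/-- if `σ` is smooth w.r.t. `N_B`, `τ` is smooth w.r.t. `N_F`, and `Φ`
sends `N_B` into `N_F`, then `σ̃ + τ` is smooth w.r.t. `N_B × N_F`. -/
theorem stmt6 (k n : ℕ) (σ : Set (Fin k → ℝ)) (hσ : IsSmoothCone (latticeEmb k) σ)
    (τ : Set (Fin n → ℝ)) (hτ : IsSmoothCone (latticeEmb n) τ)
    (Φ : (Fin k → ℝ) →ₗ[ℝ] (Fin n → ℝ))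
    (hΦ : ∀ v : Fin k → ℤ, ∃ w : Fin n → ℤ, Φ (latticeEmb k v) = latticeEmb n w) :
    IsSmoothCone ((latticeEmb k).prodMap (latticeEmb n)) (twistedCone Φ σ τ) := by
  obtain ⟨ψ, hψ⟩ := AddMonoidHom.exists_comp_eq_of_injective (latticeEmb_injective n)
    (Φ.toAddMonoidHom.comp (latticeEmb k)) hΦ
  rw [twistedCone_eq]
  exact hσ.graph_add_inr hτ Φ ψ hψ
end
end

section
/- Let Σ_B be a fan in ℝ^k and Σ_F a fan in ℝ^n, and let Φ : |Σ_B| → ℝ^n be continuous and linear on each cone of Σ_B. Then the collection Σ_B ⋉_Φ Σ_F := {σ̃ + τ : σ ∈ Σ_B, τ ∈ Σ_F}, where σ̃ = {(x, Φ(x)) : x ∈ σ} and τ is embedded as {0} × τ, is a fan in ℝ^k × ℝ^n: every face of a cone in the collection belongs to the collection, and any two cones in the collection intersect in a common face. -/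
/-!
Where `Φ` agrees with a linear map `L` on `σ`, the twisted cone `σ̃ + τ` is the image of
`σ × τ` under the linear shear `(x, y) ↦ (x, y + L x)`. Products and linear automorphisms
preserve polyhedrality, strong convexity and faces, and a face of `σ × τ` is a product of faces
(because `0 ∈ σ` and `0 ∈ τ`); hence the faces of `σ̃ + τ` are exactly the twisted cones `σ̃' + τ'`
of faces `σ' ≤ σ`, `τ' ≤ τ`. Finally `p ∈ σ̃ + τ` iff `p.1 ∈ σ` and `p.2 - Φ p.1 ∈ τ`, so
`(σ̃₁ + τ₁) ∩ (σ̃₂ + τ₂)` is the twisted cone of `σ₁ ∩ σ₂` and `τ₁ ∩ τ₂`, a face of each.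
-/

open scoped Pointwise

noncomputable section

def IsFan {E : Type*} [AddCommGroup E] [Module ℝ E] (F : Set (Set E)) : Prop :=
  F.Finite ∧
  (∀ C ∈ F, IsPolyCone C ∧ C ∩ (-C) = {0}) ∧
  (∀ C ∈ F, ∀ G : Set E, IsFaceOf G C → G ∈ F) ∧
  (∀ C ∈ F, ∀ D ∈ F, IsFaceOf (C ∩ D) C ∧ IsFaceOf (C ∩ D) D)

def IsPLOn {k n : ℕ} (Φ : (Fin k → ℝ) → (Fin n → ℝ)) (F : Set (Set (Fin k → ℝ))) : Prop :=
  ContinuousOn Φ (⋃₀ F) ∧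
  ∀ σ ∈ F, ∃ ℓ : (Fin k → ℝ) →ₗ[ℝ] (Fin n → ℝ), ∀ x ∈ σ, Φ x = ℓ x

def twistedFan {k n : ℕ} (Φ : (Fin k → ℝ) → (Fin n → ℝ)) (SB : Set (Set (Fin k → ℝ)))
    (SF : Set (Set (Fin n → ℝ))) : Set (Set ((Fin k → ℝ) × (Fin n → ℝ))) :=
  {C | ∃ σ ∈ SB, ∃ τ ∈ SF, C = twistedCone Φ σ τ}

open Set

theorem sep_prod_add_eq_zero {α β : Type*} {C : Set α} {D : Set β} {f : α → ℝ} {g : β → ℝ}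
    (hf : ∀ x ∈ C, f x ≤ 0) (hg : ∀ y ∈ D, g y ≤ 0) :
    {p ∈ C ×ˢ D | f p.1 + g p.2 = 0} = {x ∈ C | f x = 0} ×ˢ {y ∈ D | g y = 0} := by
  ext ⟨x, y⟩
  simp only [mem_sep_iff, mem_prod]
  constructor
  · rintro ⟨⟨hx, hy⟩, h⟩
    have := hf x hx
    have := hg y hy
    exact ⟨⟨hx, by linarith⟩, hy, by linarith⟩
  · rintro ⟨⟨hx, hfx⟩, hy, hgy⟩
    exact ⟨⟨hx, hy⟩, by rw [hfx, hgy, add_zero]⟩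

section Cones

variable {E F : Type*} [AddCommGroup E] [Module ℝ E] [AddCommGroup F] [Module ℝ F]

theorem isPolyCone_iff_exists_finite {C : Set E} :
    IsPolyCone C ↔ ∃ s : Set E, s.Finite ∧
      C = (Submodule.span {c : ℝ // 0 ≤ c} s : Set E) := by
  refine ⟨fun ⟨s, hs⟩ => ⟨s, s.finite_toSet, hs⟩, fun ⟨s, hs, hC⟩ => ⟨hs.toFinset, ?_⟩⟩
  rwa [Finite.coe_toFinset]

theorem IsPolyCone.zero_mem {C : Set E} (h : IsPolyCone C) : (0 : E) ∈ C := by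
  obtain ⟨s, rfl⟩ := h
  exact Submodule.zero_mem _

theorem IsPolyCone.image {C : Set E} (h : IsPolyCone C) (f : E →ₗ[ℝ] F) :
    IsPolyCone (f '' C) := by
  obtain ⟨s, hs, rfl⟩ := isPolyCone_iff_exists_finite.1 h
  refine isPolyCone_iff_exists_finite.2 ⟨f '' s, hs.image f, ?_⟩
  exact congrArg SetLike.coe (Submodule.map_span (f.restrictScalars {c : ℝ // 0 ≤ c}) s)

theorem IsPolyCone.prod {C : Set E} {D : Set F} (hC : IsPolyCone C) (hD : IsPolyCone D) :
    IsPolyCone (C ×ˢ D) := by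
  obtain ⟨s, hs, rfl⟩ := isPolyCone_iff_exists_finite.1 hC
  obtain ⟨t, ht, rfl⟩ := isPolyCone_iff_exists_finite.1 hD
  refine isPolyCone_iff_exists_finite.2 ⟨LinearMap.inl {c : ℝ // 0 ≤ c} E F '' s ∪
    LinearMap.inr {c : ℝ // 0 ≤ c} E F '' t, (hs.image _).union (ht.image _), ?_⟩
  rw [LinearMap.span_inl_union_inr, Submodule.prod_coe]

theorem image_inter_neg_image {C : Set E} (e : E ≃ₗ[ℝ] F) :
    e '' C ∩ -(e '' C) = e '' (C ∩ -C) := by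
  rw [image_inter e.injective, ← image_neg_eq_neg, ← image_neg_eq_neg, image_image, image_image]
  simp only [map_neg]

theorem IsFaceOf.subset {G C : Set E} (h : IsFaceOf G C) : G ⊆ C := by
  rcases h with rfl | ⟨ℓ, -, rfl⟩
  exacts [subset_rfl, sep_subset _ _]

theorem IsFaceOf.exists_linearMap {G C : Set E} (h : IsFaceOf G C) :
    ∃ ℓ : E →ₗ[ℝ] ℝ, (∀ x ∈ C, ℓ x ≤ 0) ∧ G = {x ∈ C | ℓ x = 0} := by
  rcases h with rfl | h
  · exact ⟨0, fun _ _ => le_rfl, by simp⟩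
  · exact h

theorem IsFaceOf.image {G C : Set E} (h : IsFaceOf G C) (e : E ≃ₗ[ℝ] F) :
    IsFaceOf (e '' G) (e '' C) := by
  obtain ⟨ℓ, hℓ, rfl⟩ := h.exists_linearMap
  refine Or.inr ⟨ℓ ∘ₗ e.symm.toLinearMap, ?_, ?_⟩
  · rintro _ ⟨x, hx, rfl⟩
    simpa using hℓ x hx
  · simp only [e.image_eq_preimage_symm]
    rfl

theorem IsFaceOf.prod {G C : Set E} {H D : Set F} (hG : IsFaceOf G C) (hH : IsFaceOf H D) :
    IsFaceOf (G ×ˢ H) (C ×ˢ D) := by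
  obtain ⟨f, hf, rfl⟩ := hG.exists_linearMap
  obtain ⟨g, hg, rfl⟩ := hH.exists_linearMap
  refine Or.inr ⟨f.coprod g, ?_, ?_⟩
  · rintro ⟨x, y⟩ ⟨hx, hy⟩
    simpa using add_nonpos (hf x hx) (hg y hy)
  · exact (sep_prod_add_eq_zero hf hg).symm

theorem IsFaceOf.exists_eq_prod {K : Set (E × F)} {C : Set E} {D : Set F} (hC : (0 : E) ∈ C)
    (hD : (0 : F) ∈ D) (h : IsFaceOf K (C ×ˢ D)) :
    ∃ G H, IsFaceOf G C ∧ IsFaceOf H D ∧ K = G ×ˢ H := by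
  obtain ⟨ℓ, hℓ, rfl⟩ := h.exists_linearMap
  have hf : ∀ x ∈ C, ℓ (x, 0) ≤ 0 := fun x hx => hℓ _ ⟨hx, hD⟩
  have hg : ∀ y ∈ D, ℓ (0, y) ≤ 0 := fun y hy => hℓ _ ⟨hC, hy⟩
  refine ⟨_, _, Or.inr ⟨ℓ ∘ₗ .inl ℝ E F, hf, rfl⟩, Or.inr ⟨ℓ ∘ₗ .inr ℝ E F, hg, rfl⟩, ?_⟩
  rw [← sep_prod_add_eq_zero (f := ℓ ∘ₗ .inl ℝ E F) (g := ℓ ∘ₗ .inr ℝ E F) hf hg]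
  simp only [LinearMap.comp_apply, LinearMap.inl_apply, LinearMap.inr_apply, ← map_add,
    Prod.mk_add_mk, add_zero, zero_add]

end Cones

section Twisted

variable {k n : ℕ} {Φ : (Fin k → ℝ) → (Fin n → ℝ)} {σ σ' : Set (Fin k → ℝ)}
  {τ τ' : Set (Fin n → ℝ)} {L : (Fin k → ℝ) →ₗ[ℝ] (Fin n → ℝ)}

theorem mem_twistedCone {p : (Fin k → ℝ) × (Fin n → ℝ)} :
    p ∈ twistedCone Φ σ τ ↔ p.1 ∈ σ ∧ p.2 - Φ p.1 ∈ τ := by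
  constructor
  · rintro ⟨_, ⟨x, hx, rfl⟩, ⟨_, y⟩, ⟨h0, hy⟩, rfl⟩
    obtain rfl : _ = (0 : Fin k → ℝ) := h0
    simpa using ⟨hx, hy⟩
  · rintro ⟨hx, hy⟩
    exact ⟨_, ⟨p.1, hx, rfl⟩, (0, p.2 - Φ p.1), ⟨rfl, hy⟩, by simp⟩

theorem twistedCone_inter_twistedCone {σ₁ σ₂ : Set (Fin k → ℝ)} {τ₁ τ₂ : Set (Fin n → ℝ)} :
    twistedCone Φ σ₁ τ₁ ∩ twistedCone Φ σ₂ τ₂ = twistedCone Φ (σ₁ ∩ σ₂) (τ₁ ∩ τ₂) := by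
  ext p
  simp only [mem_inter_iff, mem_twistedCone]
  tauto

theorem twistedCone_eq_image_skewProd (hL : EqOn Φ L σ) :
    twistedCone Φ σ τ =
      (LinearEquiv.refl ℝ _).skewProd (LinearEquiv.refl ℝ _) L '' σ ×ˢ τ := by
  ext p
  rw [mem_twistedCone, LinearEquiv.image_eq_preimage_symm]
  simp only [mem_preimage, LinearEquiv.skewProd_symm_apply, LinearEquiv.refl_symm,
    LinearEquiv.refl_apply, mem_prod]
  exact and_congr_right fun hp => by rw [hL hp]

theorem isPolyCone_twistedCone (hL : EqOn Φ L σ) (hσ : IsPolyCone σ) (hτ : IsPolyCone τ) :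
    IsPolyCone (twistedCone Φ σ τ) := by
  rw [twistedCone_eq_image_skewProd hL]
  exact (hσ.prod hτ).image _

theorem twistedCone_inter_neg (hL : EqOn Φ L σ) (hσ : σ ∩ -σ = {0}) (hτ : τ ∩ -τ = {0}) :
    twistedCone Φ σ τ ∩ -twistedCone Φ σ τ = {0} := by
  rw [twistedCone_eq_image_skewProd hL, image_inter_neg_image, neg_prod, prod_inter_prod, hσ, hτ,
    singleton_prod_singleton, image_singleton, Prod.mk_zero_zero, map_zero]

theorem isFaceOf_twistedCone (hL : EqOn Φ L σ) (hσ' : IsFaceOf σ' σ) (hτ' : IsFaceOf τ' τ) :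
    IsFaceOf (twistedCone Φ σ' τ') (twistedCone Φ σ τ) := by
  rw [twistedCone_eq_image_skewProd hL, twistedCone_eq_image_skewProd (hL.mono hσ'.subset)]
  exact (hσ'.prod hτ').image _

theorem exists_eq_twistedCone_of_isFaceOf (hL : EqOn Φ L σ) (hσ : (0 : Fin k → ℝ) ∈ σ)
    (hτ : (0 : Fin n → ℝ) ∈ τ) {G : Set ((Fin k → ℝ) × (Fin n → ℝ))}
    (hG : IsFaceOf G (twistedCone Φ σ τ)) :
    ∃ σ' τ', IsFaceOf σ' σ ∧ IsFaceOf τ' τ ∧ G = twistedCone Φ σ' τ' := by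
  rw [twistedCone_eq_image_skewProd hL] at hG
  have hG' := hG.image ((LinearEquiv.refl ℝ _).skewProd (LinearEquiv.refl ℝ _) L).symm
  simp only [image_image, LinearEquiv.symm_apply_apply, image_id'] at hG'
  obtain ⟨σ', τ', hσ', hτ', hprod⟩ := hG'.exists_eq_prod hσ hτ
  refine ⟨σ', τ', hσ', hτ', ?_⟩
  rw [twistedCone_eq_image_skewProd (hL.mono hσ'.subset), ← hprod, image_image]
  simp only [LinearEquiv.apply_symm_apply, image_id']

end Twisted

/-- the twisted product of two fans along a piecewise linear map is a fan. -/
theorem stmt7 (k n : ℕ) (SB : Set (Set (Fin k → ℝ))) (hB : IsFan SB)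
    (SF : Set (Set (Fin n → ℝ))) (hF : IsFan SF)
    (Φ : (Fin k → ℝ) → (Fin n → ℝ)) (hΦ : IsPLOn Φ SB) :
    IsFan (twistedFan Φ SB SF) := by
  obtain ⟨hBfin, hBcone, hBface, hBinter⟩ := hB
  obtain ⟨hFfin, hFcone, hFface, hFinter⟩ := hF
  refine ⟨?_, ?_, ?_, ?_⟩
  · refine ((hBfin.prod hFfin).image fun q => twistedCone Φ q.1 q.2).subset ?_
    rintro _ ⟨σ, hσ, τ, hτ, rfl⟩
    exact ⟨(σ, τ), ⟨hσ, hτ⟩, rfl⟩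
  · rintro _ ⟨σ, hσ, τ, hτ, rfl⟩
    obtain ⟨L, hL⟩ := hΦ.2 σ hσ
    exact ⟨isPolyCone_twistedCone hL (hBcone σ hσ).1 (hFcone τ hτ).1,
      twistedCone_inter_neg hL (hBcone σ hσ).2 (hFcone τ hτ).2⟩
  · rintro _ ⟨σ, hσ, τ, hτ, rfl⟩ G hG
    obtain ⟨L, hL⟩ := hΦ.2 σ hσ
    obtain ⟨σ', τ', hσ', hτ', rfl⟩ := exists_eq_twistedCone_of_isFaceOf hL
      (hBcone σ hσ).1.zero_mem (hFcone τ hτ).1.zero_mem hG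
    exact ⟨σ', hBface σ hσ σ' hσ', τ', hFface τ hτ τ' hτ', rfl⟩
  · rintro _ ⟨σ₁, hσ₁, τ₁, hτ₁, rfl⟩ _ ⟨σ₂, hσ₂, τ₂, hτ₂, rfl⟩
    obtain ⟨L₁, hL₁⟩ := hΦ.2 σ₁ hσ₁
    obtain ⟨L₂, hL₂⟩ := hΦ.2 σ₂ hσ₂
    rw [twistedCone_inter_twistedCone]
    exact ⟨isFaceOf_twistedCone hL₁ (hBinter σ₁ hσ₁ σ₂ hσ₂).1 (hFinter τ₁ hτ₁ τ₂ hτ₂).1,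
      isFaceOf_twistedCone hL₂ (hBinter σ₁ hσ₁ σ₂ hσ₂).2 (hFinter τ₁ hτ₁ τ₂ hτ₂).2⟩
end
end

section
/- Let Σ = Σ_B ⋉_Φ Σ_F be a twisted product of fans. A collection of rays {0}×ρ_{i_1}, …, {0}×ρ_{i_l}, τ̃_{j_1}, …, τ̃_{j_m} of Σ spans a cone of Σ if and only if ρ_{i_1}, …, ρ_{i_l} span a cone of Σ_F and τ_{j_1}, …, τ_{j_m} span a cone of Σ_B. In particular, the Stanley–Reisner ideal of Σ equals I_{Σ_B} + I_{Σ_F} in ℝ[x_1,…,x_r, y_1,…,y_s]. -/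
open scoped Pointwise

noncomputable section

/-- A ray: a one-dimensional cone, i.e. the nonnegative span of a single nonzero vector. -/
def IsRayCone {E : Type*} [AddCommMonoid E] [Module ℝ E] (C : Set E) : Prop :=
  ∃ v : E, v ≠ 0 ∧ C = posSpan {v}

/-! If `Φ` agrees with a linear map `ℓ` on `σ`, the twisted cone `σ̃ + τ` is the image of `σ × τ`
under the shear `(x, y) ↦ (x, y + ℓ x)`, and so is the nonnegative span of the lifted rays once
their base vectors lie in `σ`. The generators `(f j, Φ (f j))` of a cone `σ̃ + τ` do have first
coordinate in `σ`, so injectivity of the shear reduces the claim to an equality of products of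
nonempty cones. The ideal identity follows since a monomial over `A ⊔ B` is the product of a
monomial over `A` and one over `B`. -/

open Set

section PosSpan

variable {E F : Type*} [AddCommMonoid E] [Module ℝ E] [AddCommMonoid F] [Module ℝ F]

theorem zero_mem_posSpan (s : Set E) : (0 : E) ∈ posSpan s :=
  Submodule.zero_mem _

theorem subset_posSpan (s : Set E) : s ⊆ posSpan s :=
  Submodule.subset_span

theorem posSpan_image (g : E →ₗ[ℝ] F) (s : Set E) : posSpan (g '' s) = g '' posSpan s :=
  (congrArg SetLike.coe (Submodule.map_span (g.restrictScalars {c : ℝ // 0 ≤ c}) s)).symm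

theorem posSpan_inl_union_inr (s : Set E) (t : Set F) :
    posSpan (LinearMap.inl ℝ E F '' s ∪ LinearMap.inr ℝ E F '' t) = posSpan s ×ˢ posSpan t :=
  congrArg SetLike.coe (LinearMap.span_inl_union_inr (R := {c : ℝ // 0 ≤ c}))

end PosSpan

def shear {E F : Type*} [AddCommMonoid E] [Module ℝ E] [AddCommGroup F] [Module ℝ F]
    (ℓ : E →ₗ[ℝ] F) : (E × F) ≃ₗ[ℝ] E × F :=
  (LinearEquiv.refl ℝ E).skewProd (LinearEquiv.refl ℝ F) ℓ

section TwistedCone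

variable {k n : ℕ} {Φ : (Fin k → ℝ) → (Fin n → ℝ)} {ℓ : (Fin k → ℝ) →ₗ[ℝ] (Fin n → ℝ)}

theorem twistedCone_eq_shear_image {σ : Set (Fin k → ℝ)} (hℓ : ∀ x ∈ σ, Φ x = ℓ x)
    (τ : Set (Fin n → ℝ)) : twistedCone Φ σ τ = shear ℓ '' (σ ×ˢ τ) := by
  ext p
  constructor
  · rintro ⟨_, ⟨x, hx, rfl⟩, ⟨a, y⟩, ⟨ha, hy⟩, rfl⟩
    obtain rfl : a = 0 := ha
    exact ⟨(x, y), ⟨hx, hy⟩, by simp [shear, hℓ x hx, add_comm]⟩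
  · rintro ⟨⟨x, y⟩, ⟨hx, hy⟩, rfl⟩
    exact ⟨(x, Φ x), ⟨x, hx, rfl⟩, (0, y), ⟨rfl, hy⟩, by simp [shear, hℓ x hx, add_comm]⟩

theorem fst_mem_of_mem_twistedCone {σ : Set (Fin k → ℝ)} {τ : Set (Fin n → ℝ)}
    {p : (Fin k → ℝ) × (Fin n → ℝ)} (hp : p ∈ twistedCone Φ σ τ) : p.1 ∈ σ := by
  obtain ⟨_, ⟨x, hx, rfl⟩, q, ⟨hq, -⟩, rfl⟩ := hp
  simpa [mem_singleton_iff.1 hq] using hx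

theorem posSpan_zero_prod_union_graphOver {s : Set (Fin k → ℝ)} (hℓ : ∀ x ∈ s, Φ x = ℓ x)
    (t : Set (Fin n → ℝ)) :
    posSpan ({0} ×ˢ t ∪ graphOver Φ s) = shear ℓ '' (posSpan s ×ˢ posSpan t) := by
  have hgen : {0} ×ˢ t ∪ graphOver Φ s =
      shear ℓ '' (LinearMap.inl ℝ _ _ '' s ∪ LinearMap.inr ℝ _ _ '' t) := by
    rw [image_union, image_image, image_image, union_comm, singleton_prod, graphOver]
    congr 1
    · exact image_congr fun x hx => by simp [shear, hℓ x hx]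
    · exact image_congr fun y _ => by simp [shear]
  rw [hgen, ← LinearEquiv.coe_coe, posSpan_image, posSpan_inl_union_inr]

theorem posSpan_mem_twistedFan_iff {SB : Set (Set (Fin k → ℝ))} {SF : Set (Set (Fin n → ℝ))}
    (hΦ : ∀ σ ∈ SB, ∃ ℓ : (Fin k → ℝ) →ₗ[ℝ] (Fin n → ℝ), ∀ x ∈ σ, Φ x = ℓ x)
    (s : Set (Fin k → ℝ)) (t : Set (Fin n → ℝ)) :
    posSpan ({0} ×ˢ t ∪ graphOver Φ s) ∈ twistedFan Φ SB SF ↔ posSpan t ∈ SF ∧ posSpan s ∈ SB := by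
  constructor
  · rintro ⟨σ, hσ, τ, hτ, h⟩
    obtain ⟨ℓ, hℓ⟩ := hΦ σ hσ
    have hsσ : s ⊆ σ := fun x hx => by
      have hmem := subset_posSpan ({0} ×ˢ t ∪ graphOver Φ s) (Or.inr ⟨x, hx, rfl⟩)
      rw [h] at hmem
      exact fst_mem_of_mem_twistedCone hmem
    rw [twistedCone_eq_shear_image hℓ,
      posSpan_zero_prod_union_graphOver (fun x hx => hℓ x (hsσ hx)),
      (shear ℓ).injective.image_injective.eq_iff,
      prod_eq_prod_iff_of_nonempty ⟨0, zero_mem_posSpan s, zero_mem_posSpan t⟩] at h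
    exact ⟨h.2 ▸ hτ, h.1 ▸ hσ⟩
  · rintro ⟨hτ, hσ⟩
    obtain ⟨ℓ, hℓ⟩ := hΦ _ hσ
    refine ⟨_, hσ, _, hτ, ?_⟩
    rw [twistedCone_eq_shear_image hℓ,
      posSpan_zero_prod_union_graphOver (fun x hx => hℓ x (subset_posSpan s hx))]

theorem posSpan_lifts_mem_twistedFan_iff {ι κ : Type*} {SB : Set (Set (Fin k → ℝ))}
    {SF : Set (Set (Fin n → ℝ))}
    (hΦ : ∀ σ ∈ SB, ∃ ℓ : (Fin k → ℝ) →ₗ[ℝ] (Fin n → ℝ), ∀ x ∈ σ, Φ x = ℓ x)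
    (e : ι → Fin n → ℝ) (f : κ → Fin k → ℝ) (A : Set ι) (B : Set κ) :
    posSpan ((fun i => ((0 : Fin k → ℝ), e i)) '' A ∪ (fun j => (f j, Φ (f j))) '' B) ∈
        twistedFan Φ SB SF ↔ posSpan (e '' A) ∈ SF ∧ posSpan (f '' B) ∈ SB := by
  rw [← image_image (Prod.mk 0) e, ← singleton_prod, ← image_image (fun x => (x, Φ x)) f]
  exact posSpan_mem_twistedFan_iff hΦ _ _

end TwistedCone

theorem Finset.image_sumElim_coe_disjSum {α β γ : Type*} (g₁ : α → γ) (g₂ : β → γ)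
    (A : Finset α) (B : Finset β) :
    Sum.elim g₁ g₂ '' (A.disjSum B : Set (α ⊕ β)) = g₁ '' A ∪ g₂ '' B := by
  ext; simp

open MvPolynomial in
theorem MvPolynomial.span_nonface_monomials_eq_sup {R α β : Type*} [CommSemiring R]
    (P : Finset (α ⊕ β) → Prop) (Q : Finset α → Prop) (Q' : Finset β → Prop)
    (h : ∀ (A : Finset α) (B : Finset β), P (A.disjSum B) ↔ Q A ∧ Q' B) :
    Ideal.span {p : MvPolynomial (α ⊕ β) R | ∃ S, ¬ P S ∧ p = ∏ i ∈ S, X i} =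
      Ideal.span {p | ∃ B, ¬ Q' B ∧ p = ∏ j ∈ B, X (Sum.inr j)} ⊔
      Ideal.span {p | ∃ A, ¬ Q A ∧ p = ∏ i ∈ A, X (Sum.inl i)} := by
  apply le_antisymm
  · rw [Ideal.span_le]
    rintro _ ⟨S, hS, rfl⟩
    obtain ⟨A, B, rfl⟩ : ∃ (A : Finset α) (B : Finset β), S = A.disjSum B :=
      ⟨_, _, S.toLeft_disjSum_toRight.symm⟩
    rw [Finset.prod_disjSum]
    rcases not_and_or.1 ((h A B).not.1 hS) with hA | hB
    · exact Ideal.mem_sup_right (Ideal.mul_mem_right _ _ (Ideal.subset_span ⟨A, hA, rfl⟩))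
    · exact Ideal.mem_sup_left (Ideal.mul_mem_left _ _ (Ideal.subset_span ⟨B, hB, rfl⟩))
  · refine sup_le (Ideal.span_mono ?_) (Ideal.span_mono ?_)
    · rintro _ ⟨B, hB, rfl⟩
      exact ⟨(∅ : Finset α).disjSum B, fun hP => hB ((h _ _).1 hP).2, by simp⟩
    · rintro _ ⟨A, hA, rfl⟩
      exact ⟨A.disjSum (∅ : Finset β), fun hP => hA ((h _ _).1 hP).1, by simp⟩

theorem stmt11_general (k n r s : ℕ) (SB : Set (Set (Fin k → ℝ)))
    (SF : Set (Set (Fin n → ℝ)))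
    (Φ : (Fin k → ℝ) → (Fin n → ℝ)) (hΦ : IsPLOn Φ SB)
    (e : Fin r → (Fin n → ℝ)) (f : Fin s → (Fin k → ℝ)) :
    (∀ (A : Finset (Fin r)) (B : Finset (Fin s)),
      posSpan ((fun i => ((0 : Fin k → ℝ), e i)) '' (A : Set (Fin r)) ∪
          (fun j => (f j, Φ (f j))) '' (B : Set (Fin s))) ∈ twistedFan Φ SB SF ↔
        (posSpan (e '' (A : Set (Fin r))) ∈ SF ∧ posSpan (f '' (B : Set (Fin s))) ∈ SB)) ∧
    (Ideal.span {P : MvPolynomial (Fin r ⊕ Fin s) ℝ | ∃ S : Finset (Fin r ⊕ Fin s),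
        posSpan ((Sum.elim (fun i => ((0 : Fin k → ℝ), e i))
            (fun j => (f j, Φ (f j)))) '' (S : Set (Fin r ⊕ Fin s))) ∉ twistedFan Φ SB SF ∧
        P = ∏ i ∈ S, MvPolynomial.X i} =
      Ideal.span {P : MvPolynomial (Fin r ⊕ Fin s) ℝ | ∃ B : Finset (Fin s),
        posSpan (f '' (B : Set (Fin s))) ∉ SB ∧
        P = ∏ j ∈ B, MvPolynomial.X (Sum.inr j)} ⊔
      Ideal.span {P : MvPolynomial (Fin r ⊕ Fin s) ℝ | ∃ A : Finset (Fin r),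
        posSpan (e '' (A : Set (Fin r))) ∉ SF ∧
        P = ∏ i ∈ A, MvPolynomial.X (Sum.inl i)}) := by
  refine ⟨fun A B => posSpan_lifts_mem_twistedFan_iff hΦ.2 e f A B,
    MvPolynomial.span_nonface_monomials_eq_sup _ _ _ fun A B => ?_⟩
  rw [Finset.image_sumElim_coe_disjSum]
  exact posSpan_lifts_mem_twistedFan_iff hΦ.2 e f A B

/-- a collection of rays `{0}×ρ_{i}` (i ∈ A) and `τ̃_{j}` (j ∈ B) of a
twisted product `Σ = Σ_B ⋉_Φ Σ_F` spans a cone of `Σ` iff the `ρ_i` (i ∈ A) span a cone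
of `Σ_F` and the `τ_j` (j ∈ B) span a cone of `Σ_B`; in particular the Stanley–Reisner
ideal of `Σ` equals `I_{Σ_B} + I_{Σ_F}` in `ℝ[x_1,…,x_r,y_1,…,y_s]`. -/
theorem stmt11 (k n r s : ℕ) (SB : Set (Set (Fin k → ℝ))) (hB : IsFan SB)
    (SF : Set (Set (Fin n → ℝ))) (hF : IsFan SF)
    (Φ : (Fin k → ℝ) → (Fin n → ℝ)) (hΦ : IsPLOn Φ SB)
    (e : Fin r → (Fin n → ℝ)) (f : Fin s → (Fin k → ℝ))
    (he : ∀ ρ : Set (Fin n → ℝ), (ρ ∈ SF ∧ IsRayCone ρ) ↔ ∃ i, ρ = posSpan {e i})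
    (hf : ∀ τ : Set (Fin k → ℝ), (τ ∈ SB ∧ IsRayCone τ) ↔ ∃ j, τ = posSpan {f j}) :
    (∀ (A : Finset (Fin r)) (B : Finset (Fin s)),
      posSpan ((fun i => ((0 : Fin k → ℝ), e i)) '' (A : Set (Fin r)) ∪
          (fun j => (f j, Φ (f j))) '' (B : Set (Fin s))) ∈ twistedFan Φ SB SF ↔
        (posSpan (e '' (A : Set (Fin r))) ∈ SF ∧ posSpan (f '' (B : Set (Fin s))) ∈ SB)) ∧
    (Ideal.span {P : MvPolynomial (Fin r ⊕ Fin s) ℝ | ∃ S : Finset (Fin r ⊕ Fin s),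
        posSpan ((Sum.elim (fun i => ((0 : Fin k → ℝ), e i))
            (fun j => (f j, Φ (f j)))) '' (S : Set (Fin r ⊕ Fin s))) ∉ twistedFan Φ SB SF ∧
        P = ∏ i ∈ S, MvPolynomial.X i} =
      Ideal.span {P : MvPolynomial (Fin r ⊕ Fin s) ℝ | ∃ B : Finset (Fin s),
        posSpan (f '' (B : Set (Fin s))) ∉ SB ∧
        P = ∏ j ∈ B, MvPolynomial.X (Sum.inr j)} ⊔
      Ideal.span {P : MvPolynomial (Fin r ⊕ Fin s) ℝ | ∃ A : Finset (Fin r),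
        posSpan (e '' (A : Set (Fin r))) ∉ SF ∧
        P = ∏ i ∈ A, MvPolynomial.X (Sum.inl i)}) :=
  stmt11_general k n r s SB SF Φ hΦ e f
end
end
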